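/- (SC-AdaNGD_1, smooth case.) Let H > 0, let f : ℝ^d → ℝ be differentiable, H-strongly convex and β-smooth with ‖∇f(x)‖ ≤ G for all x ∈ K, and suppose the global minimizer x* := argmin_{x ∈ ℝ^d} f(x) belongs to K. Let x_1, …, x_T and x̄_T be the SC-AdaNGD_k iterates and output with k = 1, with g_t := ∇f(x_t) ≠ 0 for all t = 1, …, T. Then f(x̄_T) − min_{x ∈ K} f(x) ≤ (β/H) · G² (1 + log T)² / (H T²). -/

import Mathlib

/-!
With weights `w_t = ‖g_t‖⁻¹` and `S_t = ∑_{τ ≤ t} w_τ`, the step `η_t = 1 / (H S_t)` makes the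
potential `H S_t / 2 · ‖x_{t+1} - x*‖²` telescope against strong convexity, so the weighted regret
`B = ∑ w_t (f(x_t) - f(x*))` is at most `∑ η_t / 2 ≤ G (1 + log T) / (2H)`. Jensen bounds
`f(x̄_T) - f(x*)` by `B / W` with `W = ∑ w_t`. Smoothness gives `‖g_t‖² ≤ 2β (f(x_t) - f(x*))`, hence
`∑ ‖g_t‖ ≤ 2β B`, and Cauchy–Schwarz `T² ≤ (∑ ‖g_t‖) W` then yields `B / W ≤ 2β B² / T²`.
-/

open Finset
open scoped RealInnerProductSpace

section InnerProductSpace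

variable {F : Type*} [NormedAddCommGroup F] [InnerProductSpace ℝ F]

theorem Convex.norm_sub_le_of_forall_norm_sub_le {K : Set F} (hK : Convex ℝ K) {u p z : F}
    (hp : p ∈ K) (hmin : ∀ y ∈ K, ‖p - u‖ ≤ ‖y - u‖) (hz : z ∈ K) : ‖p - z‖ ≤ ‖u - z‖ := by
  have : Nonempty K := ⟨⟨p, hp⟩⟩
  have hinf : ‖u - p‖ = ⨅ y : K, ‖u - y‖ :=
    le_antisymm (le_ciInf fun y => by simpa only [norm_sub_rev] using hmin y y.2)
      (ciInf_le (f := fun y : K => ‖u - y‖) ⟨0, by rintro _ ⟨_, rfl⟩; exact norm_nonneg _⟩ ⟨p, hp⟩)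
  have hvar : ⟪u - p, z - p⟫ ≤ 0 := (norm_eq_iInf_iff_real_inner_le_zero hK hp).mp hinf z hz
  have hsq : ‖p - z‖ ^ 2 ≤ ‖u - z‖ ^ 2 := by
    rw [show u - z = (u - p) - (z - p) by abel, norm_sub_sq_real (u - p), norm_sub_rev p z]
    nlinarith [sq_nonneg ‖u - p‖]
  exact (pow_le_pow_iff_left₀ (norm_nonneg _) (norm_nonneg _) two_ne_zero).mp hsq

theorem norm_proj_sub_sq_le {K : Set F} (hK : Convex ℝ K) {proj : F → F}
    (hproj_mem : ∀ y, proj y ∈ K) (hproj_min : ∀ y, ∀ z ∈ K, ‖proj y - y‖ ≤ ‖z - y‖)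
    (x v : F) {z : F} (hz : z ∈ K) :
    ‖proj (x - v) - z‖ ^ 2 ≤ ‖x - z‖ ^ 2 - 2 * ⟪v, x - z⟫ + ‖v‖ ^ 2 := by
  have h := hK.norm_sub_le_of_forall_norm_sub_le (hproj_mem (x - v)) (hproj_min (x - v)) hz
  calc ‖proj (x - v) - z‖ ^ 2 ≤ ‖(x - z) - v‖ ^ 2 := by
        rw [sub_right_comm]; gcongr
    _ = _ := by rw [norm_sub_sq_real, real_inner_comm]

theorem map_sum_smul_le_of_supporting {ι : Type*} (s : Finset ι) {p : ι → ℝ} {y : ι → F}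
    (hp : ∀ i ∈ s, 0 ≤ p i) (hp1 : ∑ i ∈ s, p i = 1) {f : F → ℝ} {a : F}
    (ha : ∀ i ∈ s, f (∑ j ∈ s, p j • y j) + ⟪a, y i - ∑ j ∈ s, p j • y j⟫ ≤ f (y i)) :
    f (∑ i ∈ s, p i • y i) ≤ ∑ i ∈ s, p i * f (y i) := by
  set c := ∑ j ∈ s, p j • y j
  have hcenter : ∑ i ∈ s, p i * ⟪a, y i - c⟫ = 0 := by
    simp only [← real_inner_smul_right, ← inner_sum, smul_sub, sum_sub_distrib, ← sum_smul, hp1,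
      one_smul, c, sub_self, inner_zero_right]
  calc f c = ∑ i ∈ s, p i * (f c + ⟪a, y i - c⟫) := by
        rw [sum_congr rfl fun i _ => mul_add (p i) _ _, sum_add_distrib, hcenter, ← sum_mul, hp1,
          one_mul, add_zero]
    _ ≤ ∑ i ∈ s, p i * f (y i) := sum_le_sum fun i hi => by gcongr; exacts [hp i hi, ha i hi]

end InnerProductSpace

section Gradient

variable {F : Type*} [NormedAddCommGroup F] [InnerProductSpace ℝ F] [CompleteSpace F]
  {f : F → ℝ} {H β : ℝ}

theorem le_of_strongConvex_of_smooth
    (hsc : ∀ x y, f x + ⟪gradient f x, y - x⟫ + (H / 2) * ‖x - y‖ ^ 2 ≤ f y)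
    (hsmooth : ∀ x y, f y ≤ f x + ⟪gradient f x, y - x⟫ + (β / 2) * ‖x - y‖ ^ 2)
    {v : F} (hv : v ≠ 0) : H ≤ β := by
  have hlow := hsc 0 v
  have hup := hsmooth 0 v
  have hv2 : 0 < ‖0 - v‖ ^ 2 := by rw [zero_sub, norm_neg]; positivity
  nlinarith

theorem norm_gradient_sq_le
    (hsmooth : ∀ x y, f y ≤ f x + ⟪gradient f x, y - x⟫ + (β / 2) * ‖x - y‖ ^ 2)
    (hβ : 0 < β) {xstar : F} (hmin : ∀ y, f xstar ≤ f y) (x : F) :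
    ‖gradient f x‖ ^ 2 ≤ 2 * β * (f x - f xstar) := by
  have h := hsmooth x (x - β⁻¹ • gradient f x)
  rw [sub_sub_cancel_left, inner_neg_right, real_inner_smul_right, real_inner_self_eq_norm_sq,
    sub_sub_cancel, norm_smul, Real.norm_of_nonneg (inv_nonneg.mpr hβ.le)] at h
  have hdescent : f (x - β⁻¹ • gradient f x) ≤ f x - ‖gradient f x‖ ^ 2 / (2 * β) := by
    convert h using 1; field_simp; ring
  have hfloor := hmin (x - β⁻¹ • gradient f x)
  have : ‖gradient f x‖ ^ 2 / (2 * β) ≤ f x - f xstar := by linarith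
  rwa [div_le_iff₀ (by positivity), mul_comm] at this

theorem norm_proj_normalized_step_sub_sq_le {K : Set F} (hK : Convex ℝ K) {proj : F → F}
    (hproj_mem : ∀ y, proj y ∈ K) (hproj_min : ∀ y, ∀ z ∈ K, ‖proj y - y‖ ≤ ‖z - y‖)
    (hsc : ∀ x y, f x + ⟪gradient f x, y - x⟫ + (H / 2) * ‖x - y‖ ^ 2 ≤ f y)
    {x z : F} (hz : z ∈ K) (hx : gradient f x ≠ 0) {η : ℝ} (hη : 0 ≤ η) :
    ‖proj (x - (η / ‖gradient f x‖) • gradient f x) - z‖ ^ 2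
      ≤ ‖x - z‖ ^ 2 - 2 * η * ‖gradient f x‖⁻¹ * (f x - f z + H / 2 * ‖x - z‖ ^ 2) + η ^ 2 := by
  have hnorm : 0 < ‖gradient f x‖ := norm_pos_iff.mpr hx
  have hgap : f x - f z + H / 2 * ‖x - z‖ ^ 2 ≤ ⟪gradient f x, x - z⟫ := by
    have := hsc x z
    rw [← neg_sub x z, inner_neg_right] at this
    linarith
  have hlen : ‖(η / ‖gradient f x‖) • gradient f x‖ = η := by
    rw [norm_smul, Real.norm_of_nonneg (by positivity), div_mul_cancel₀ _ hnorm.ne']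
  have hstep := norm_proj_sub_sq_le hK hproj_mem hproj_min x
    ((η / ‖gradient f x‖) • gradient f x) hz
  rw [real_inner_smul_left, hlen] at hstep
  have : η / ‖gradient f x‖ * (f x - f z + H / 2 * ‖x - z‖ ^ 2)
      ≤ η / ‖gradient f x‖ * ⟪gradient f x, x - z⟫ := by gcongr
  linear_combination hstep + 2 * this

theorem map_weighted_mean_sub_le {ι : Type*} (hH : 0 ≤ H)
    (hsc : ∀ x y, f x + ⟪gradient f x, y - x⟫ + (H / 2) * ‖x - y‖ ^ 2 ≤ f y)
    (s : Finset ι) {w : ι → ℝ} (hw : ∀ i ∈ s, 0 ≤ w i) (hW : 0 < ∑ i ∈ s, w i) (y : ι → F)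
    (c : ℝ) :
    f (∑ i ∈ s, (w i / ∑ j ∈ s, w j) • y i) - c
      ≤ (∑ i ∈ s, w i * (f (y i) - c)) / ∑ i ∈ s, w i := by
  have hconv : ∀ u v, f u + ⟪gradient f u, v - u⟫ ≤ f v := fun u v => by
    nlinarith [hsc u v, sq_nonneg ‖u - v‖]
  have hp1 : ∑ i ∈ s, w i / ∑ j ∈ s, w j = 1 := by rw [← sum_div, div_self hW.ne']
  have hjensen := map_sum_smul_le_of_supporting s (y := y)
    (fun i hi => div_nonneg (hw i hi) hW.le) hp1 fun i _ => hconv _ _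
  have hmean : ∑ i ∈ s, w i / (∑ j ∈ s, w j) * f (y i) - c
      = (∑ i ∈ s, w i * (f (y i) - c)) / ∑ i ∈ s, w i := by
    calc _ = ∑ i ∈ s, w i / (∑ j ∈ s, w j) * (f (y i) - c) := by
          simp only [mul_sub, sum_sub_distrib, ← sum_mul, hp1, one_mul]
      _ = _ := by rw [sum_div]; exact sum_congr rfl fun i _ => by ring
  linarith

end Gradient

theorem weighted_gap_add_potential_le {H S w η Δ D D' : ℝ} (hc : 0 ≤ H * (S + w))
    (hη : η * (H * (S + w)) = 1)
    (hrec : D' ≤ D - 2 * η * w * (Δ + H / 2 * D) + η ^ 2) :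
    w * Δ + H * (S + w) / 2 * D' ≤ H * S / 2 * D + η / 2 := by
  have := mul_le_mul_of_nonneg_left hrec hc
  linear_combination this / 2 + (η / 2 - w * (Δ + H / 2 * D)) * hη

theorem sum_mul_le_half_sum_of_adaptive_step {T : ℕ} {H : ℝ} (hH : 0 < H) {w Δ D η : ℕ → ℝ}
    (hw : ∀ t ∈ Icc 1 T, 0 < w t) (hD : ∀ t, 0 ≤ D t)
    (hη : ∀ t, η t = 1 / (H * ∑ τ ∈ Icc 1 t, w τ))
    (hrec : ∀ t ∈ Icc 1 T, D (t + 1) ≤ D t - 2 * η t * w t * (Δ t + H / 2 * D t) + η t ^ 2) :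
    ∑ t ∈ Icc 1 T, w t * Δ t ≤ (∑ t ∈ Icc 1 T, η t) / 2 := by
  have hS : ∀ n ≤ T, 0 ≤ ∑ τ ∈ Icc 1 n, w τ := fun n hn =>
    sum_nonneg fun τ hτ => (hw τ (Icc_subset_Icc_right hn hτ)).le
  -- the potential `H S_n / 2 * D (n + 1)` telescopes
  have key : ∀ n ≤ T, ∑ t ∈ Icc 1 n, w t * Δ t + H * (∑ τ ∈ Icc 1 n, w τ) / 2 * D (n + 1)
      ≤ (∑ t ∈ Icc 1 n, η t) / 2 := by
    intro n hn
    induction n with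
    | zero => simp
    | succ n ih =>
      have hmem : n + 1 ∈ Icc 1 T := mem_Icc.mpr ⟨n.succ_pos, hn⟩
      have hsum : ∀ a : ℕ → ℝ, ∑ t ∈ Icc 1 (n + 1), a t = ∑ t ∈ Icc 1 n, a t + a (n + 1) :=
        fun a => sum_Icc_succ_top n.succ_pos a
      have hpos : 0 < H * (∑ τ ∈ Icc 1 n, w τ + w (n + 1)) :=
        mul_pos hH (add_pos_of_nonneg_of_pos (hS n (n.le_succ.trans hn)) (hw _ hmem))
      have hstep := weighted_gap_add_potential_le hpos.le
        (by rw [hη, ← hsum, one_div_mul_cancel (by rw [hsum]; exact hpos.ne')]) (hrec _ hmem)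
      rw [hsum, hsum, hsum]
      linarith [ih (n.le_succ.trans hn)]
  have hlast := key T le_rfl
  have := mul_nonneg (div_nonneg (mul_nonneg hH.le (hS T le_rfl)) zero_le_two) (hD (T + 1))
  linarith

theorem sum_Icc_inv_le_one_add_log (n : ℕ) : ∑ i ∈ Icc 1 n, (i : ℝ)⁻¹ ≤ 1 + Real.log n := by
  have h := harmonic_le_one_add_log n
  simpa only [harmonic_eq_sum_Icc, Rat.cast_sum, Rat.cast_inv, Rat.cast_natCast] using h

theorem sum_stepSize_le {T : ℕ} {H G : ℝ} (hH : 0 < H) (hG : 0 < G) {w η : ℕ → ℝ}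
    (hw : ∀ t ∈ Icc 1 T, G⁻¹ ≤ w t) (hη : ∀ t, η t = 1 / (H * ∑ τ ∈ Icc 1 t, w τ)) :
    ∑ t ∈ Icc 1 T, η t ≤ G / H * (1 + Real.log T) := by
  have hηt : ∀ t ∈ Icc 1 T, η t ≤ G / H * (t : ℝ)⁻¹ := by
    intro t ht
    obtain ⟨ht1, htT⟩ := mem_Icc.mp ht
    have hlow : t * G⁻¹ ≤ ∑ τ ∈ Icc 1 t, w τ := by
      simpa [nsmul_eq_mul] using card_nsmul_le_sum (Icc 1 t) w G⁻¹
        fun τ hτ => hw τ (Icc_subset_Icc_right htT hτ)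
    have : (0 : ℝ) < t := by exact_mod_cast ht1
    calc η t ≤ 1 / (H * (t * G⁻¹)) := by rw [hη]; gcongr
      _ = G / H * (t : ℝ)⁻¹ := by field_simp
  calc ∑ t ∈ Icc 1 T, η t ≤ ∑ t ∈ Icc 1 T, G / H * (t : ℝ)⁻¹ := sum_le_sum hηt
    _ ≤ G / H * (1 + Real.log T) := by
      rw [← mul_sum]; gcongr; exact sum_Icc_inv_le_one_add_log T

theorem div_le_of_sq_le_mul {B W N T β : ℝ} (hB : 0 ≤ B) (hW : 0 < W) (hT : 0 < T)
    (hN : N ≤ 2 * β * B) (hCS : T ^ 2 ≤ N * W) : B / W ≤ 2 * β * B ^ 2 / T ^ 2 := by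
  have := hCS.trans (mul_le_mul_of_nonneg_right hN hW.le)
  rw [div_le_div_iff₀ hW (by positivity)]
  nlinarith [mul_le_mul_of_nonneg_left this hB]

theorem card_sq_le_sum_mul_sum_inv {ι : Type*} (s : Finset ι) {a : ι → ℝ}
    (ha : ∀ i ∈ s, 0 < a i) : (#s : ℝ) ^ 2 ≤ (∑ i ∈ s, a i) * ∑ i ∈ s, (a i)⁻¹ := by
  simpa using sum_sq_le_sum_mul_sum_of_sq_le_mul s (r := fun _ => (1 : ℝ))
    (fun i hi => (ha i hi).le) (fun i hi => (inv_pos.mpr (ha i hi)).le)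
    fun i hi => by rw [mul_inv_cancel₀ (ha i hi).ne', one_pow]

theorem sc_adangd_one_smooth_general
    {d : ℕ} (T : ℕ) (hT : 1 ≤ T) (H G β : ℝ) (hH : 0 < H)
    (K : Set (EuclideanSpace ℝ (Fin d)))
    (hKconv : Convex ℝ K)
    (proj : EuclideanSpace ℝ (Fin d) → EuclideanSpace ℝ (Fin d))
    (hproj_mem : ∀ y, proj y ∈ K)
    (hproj_min : ∀ y, ∀ z ∈ K, ‖proj y - y‖ ≤ ‖z - y‖)
    (f : EuclideanSpace ℝ (Fin d) → ℝ)
    (hsc : ∀ x y, f x + (inner ℝ (gradient f x) (y - x) : ℝ) + (H / 2) * ‖x - y‖ ^ 2 ≤ f y)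
    (hsmooth : ∀ x y, f y ≤ f x + (inner ℝ (gradient f x) (y - x) : ℝ) + (β / 2) * ‖x - y‖ ^ 2)
    (hG : ∀ x ∈ K, ‖gradient f x‖ ≤ G)
    (xstar : EuclideanSpace ℝ (Fin d)) (hxstarK : xstar ∈ K)
    (hmin : ∀ y, f xstar ≤ f y)
    (x : ℕ → EuclideanSpace ℝ (Fin d)) (g : ℕ → EuclideanSpace ℝ (Fin d)) (η : ℕ → ℝ)
    (hx1 : x 1 ∈ K)
    (hg : ∀ t, g t = gradient f (x t))
    (hgne : ∀ t ∈ Finset.Icc 1 T, g t ≠ 0)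
    (hη : ∀ t, η t = 1 / (H * ∑ τ ∈ Finset.Icc 1 t, (‖g τ‖)⁻¹))
    (hupd : ∀ t ∈ Finset.Icc 1 T, x (t + 1) = proj (x t - (η t / ‖g t‖) • g t))
    (xbar : EuclideanSpace ℝ (Fin d))
    (hxbar : xbar = ∑ t ∈ Finset.Icc 1 T, (((‖g t‖)⁻¹) / ∑ τ ∈ Finset.Icc 1 T, (‖g τ‖)⁻¹) • x t)
    :
    ∀ xs ∈ K,
      f xbar - f xs ≤ (β / H) * G ^ 2 * (1 + Real.log T) ^ 2 / (H * T ^ 2) := by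
  intro xs _
  have hgpos : ∀ t ∈ Icc 1 T, 0 < ‖g t‖ := fun t ht => norm_pos_iff.mpr (hgne t ht)
  have hxK : ∀ t ∈ Icc 1 T, x t ∈ K := by
    rintro (_ | _ | s) ht
    · simp at ht
    · exact hx1
    · exact hupd (s + 1) (mem_Icc.mpr ⟨s.succ_pos, by grind⟩) ▸ hproj_mem _
  have hgG : ∀ t ∈ Icc 1 T, ‖g t‖ ≤ G := fun t ht => hg t ▸ hG _ (hxK t ht)
  have hT1 : 1 ∈ Icc 1 T := mem_Icc.mpr ⟨le_rfl, hT⟩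
  have hGpos : 0 < G := (hgpos 1 hT1).trans_le (hgG 1 hT1)
  have hβ : 0 < β := hH.trans_le (le_of_strongConvex_of_smooth hsc hsmooth (hg 1 ▸ hgne 1 hT1))
  set B := ∑ t ∈ Icc 1 T, ‖g t‖⁻¹ * (f (x t) - f xstar)
  have hregret : B ≤ G / H * (1 + Real.log T) / 2 := by
    refine (sum_mul_le_half_sum_of_adaptive_step hH (fun t ht => inv_pos.mpr (hgpos t ht))
      (fun t => sq_nonneg ‖x t - xstar‖) hη fun t ht => ?_).trans ?_
    · rw [hupd t ht, hg t]
      exact norm_proj_normalized_step_sub_sq_le hKconv hproj_mem hproj_min hsc hxstarK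
        (hg t ▸ hgne t ht) ((hη t).symm ▸ by positivity)
    · gcongr
      exact sum_stepSize_le hH hGpos (fun t ht => inv_anti₀ (hgpos t ht) (hgG t ht)) hη
  have hnorms : ∑ t ∈ Icc 1 T, ‖g t‖ ≤ 2 * β * B := by
    rw [mul_sum]
    refine sum_le_sum fun t ht => ?_
    rw [mul_left_comm, le_inv_mul_iff₀ (hgpos t ht), ← sq]
    exact hg t ▸ norm_gradient_sq_le hsmooth hβ hmin (x t)
  have hB : 0 ≤ B := sum_nonneg fun t _ => mul_nonneg (by positivity) (sub_nonneg.mpr (hmin _))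
  have hW : 0 < ∑ t ∈ Icc 1 T, ‖g t‖⁻¹ := sum_pos (fun t ht => inv_pos.mpr (hgpos t ht)) ⟨1, hT1⟩
  calc f xbar - f xs ≤ f xbar - f xstar := by linarith [hmin xs]
    _ ≤ B / ∑ t ∈ Icc 1 T, ‖g t‖⁻¹ := hxbar ▸ map_weighted_mean_sub_le hH.le hsc _
      (fun t _ => by positivity) hW x (f xstar)
    _ ≤ 2 * β * B ^ 2 / T ^ 2 := div_le_of_sq_le_mul hB hW (by positivity) hnorms
      (by simpa using card_sq_le_sum_mul_sum_inv (Icc 1 T) hgpos)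
    _ ≤ 2 * β * (G / H * (1 + Real.log T) / 2) ^ 2 / T ^ 2 := by gcongr
    _ = (β / H) * G ^ 2 * (1 + Real.log T) ^ 2 / (H * T ^ 2) / 2 := by field_simp
    _ ≤ (β / H) * G ^ 2 * (1 + Real.log T) ^ 2 / (H * T ^ 2) := half_le_self (by positivity)

theorem sc_adangd_one_smooth
    {d : ℕ} (T : ℕ) (hT : 1 ≤ T) (H G β : ℝ) (hH : 0 < H)
    (K : Set (EuclideanSpace ℝ (Fin d)))
    (hKne : K.Nonempty) (hKcl : IsClosed K) (hKbdd : Bornology.IsBounded K)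
    (hKconv : Convex ℝ K)
    (proj : EuclideanSpace ℝ (Fin d) → EuclideanSpace ℝ (Fin d))
    (hproj_mem : ∀ y, proj y ∈ K)
    (hproj_min : ∀ y, ∀ z ∈ K, ‖proj y - y‖ ≤ ‖z - y‖)
    (f : EuclideanSpace ℝ (Fin d) → ℝ)
    (hdiff : Differentiable ℝ f)
    (hsc : ∀ x y, f x + (inner ℝ (gradient f x) (y - x) : ℝ) + (H / 2) * ‖x - y‖ ^ 2 ≤ f y)
    (hsmooth : ∀ x y, f y ≤ f x + (inner ℝ (gradient f x) (y - x) : ℝ) + (β / 2) * ‖x - y‖ ^ 2)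
    (hG : ∀ x ∈ K, ‖gradient f x‖ ≤ G)
    (xstar : EuclideanSpace ℝ (Fin d)) (hxstarK : xstar ∈ K)
    (hmin : ∀ y, f xstar ≤ f y)
    (x : ℕ → EuclideanSpace ℝ (Fin d)) (g : ℕ → EuclideanSpace ℝ (Fin d)) (η : ℕ → ℝ)
    (hx1 : x 1 ∈ K)
    (hg : ∀ t, g t = gradient f (x t))
    (hgne : ∀ t ∈ Finset.Icc 1 T, g t ≠ 0)
    (hη : ∀ t, η t = 1 / (H * ∑ τ ∈ Finset.Icc 1 t, (‖g τ‖)⁻¹))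
    (hupd : ∀ t ∈ Finset.Icc 1 T, x (t + 1) = proj (x t - (η t / ‖g t‖) • g t))
    (xbar : EuclideanSpace ℝ (Fin d))
    (hxbar : xbar = ∑ t ∈ Finset.Icc 1 T, (((‖g t‖)⁻¹) / ∑ τ ∈ Finset.Icc 1 T, (‖g τ‖)⁻¹) • x t)
    :
    ∀ xs ∈ K,
      f xbar - f xs ≤ (β / H) * G ^ 2 * (1 + Real.log T) ^ 2 / (H * T ^ 2) :=
  sc_adangd_one_smooth_general T hT H G β hH K hKconv proj hproj_mem hproj_min f hsc hsmooth hG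
    xstar hxstarK hmin x g η hx1 hg hgne hη hupd xbar hxbar
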